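/- Let Γ be a group and let S and S′ be two finite generating sets of Γ, neither containing the identity. Then there exists d such that every finite induced subgraph of Cay(Γ, S) has twin-width at most d if and only if there exists d′ such that every finite induced subgraph of Cay(Γ, S′) has twin-width at most d′. (Having bounded twin-width is a group invariant, independent of the chosen finite generating set.) -/

import Mathlib

/-- A trigraph: a finite vertex set with disjoint black and red edge sets. -/
structure Trigraph (V : Type*) where
  verts : Finset V
  black : V → V → Prop
  red : V → V → Prop
  black_symm : ∀ u v, black u v → black v u
  red_symm : ∀ u v, red u v → red v u
  black_irrefl : ∀ u, ¬ black u u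
  red_irrefl : ∀ u, ¬ red u u
  black_red_disjoint : ∀ u v, black u v → ¬ red u v
  black_mem : ∀ u v, black u v → u ∈ verts ∧ v ∈ verts
  red_mem : ∀ u v, red u v → u ∈ verts ∧ v ∈ verts

namespace Trigraph

variable {V : Type*} [DecidableEq V]

/-- The red degree of a vertex. -/
noncomputable def redDeg (G : Trigraph V) (x : V) : ℕ := {y | G.red x y}.ncard

/-- `G` is a `d`-trigraph: every vertex is incident to at most `d` red edges. -/
def RedDegLE (G : Trigraph V) (d : ℕ) : Prop := ∀ x, G.redDeg x ≤ d

/-- `G'` is obtained from `G` by contracting the two distinct vertices `u` and `v`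
(the contracted vertex is represented by `u`, and `v` is deleted). -/
def IsContractionAt (G G' : Trigraph V) (u v : V) : Prop :=
  u ∈ G.verts ∧ v ∈ G.verts ∧ u ≠ v ∧
  G'.verts = G.verts.erase v ∧
  (∀ x y, x ≠ u → y ≠ u → (G'.black x y ↔ (G.black x y ∧ x ≠ v ∧ y ≠ v))) ∧
  (∀ x y, x ≠ u → y ≠ u → (G'.red x y ↔ (G.red x y ∧ x ≠ v ∧ y ≠ v))) ∧
  (∀ x, x ≠ u → x ≠ v → (G'.black u x ↔ (G.black u x ∧ G.black v x))) ∧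
  (∀ x, x ≠ u → x ≠ v →
    (G'.red u x ↔
      ((G.black u x ∨ G.red u x ∨ G.black v x ∨ G.red v x) ∧ ¬ (G.black u x ∧ G.black v x))))

/-- `G'` is obtained from `G` by contracting some pair of vertices. -/
def IsContraction (G G' : Trigraph V) : Prop := ∃ u v, IsContractionAt G G' u v

/-- `G` admits a `d`-sequence: a sequence `G = G_n, …, G_1` of `d`-trigraphs, each obtained
from the previous one by a contraction, ending in a one-vertex trigraph. -/
def HasSeq (G : Trigraph V) (d : ℕ) : Prop :=
  ∃ f : ℕ → Trigraph V,
    f G.verts.card = G ∧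
    (∀ i, 1 ≤ i → i < G.verts.card → IsContraction (f (i + 1)) (f i)) ∧
    (∀ i, 1 ≤ i → i ≤ G.verts.card → (f i).RedDegLE d)

/-- The twin-width of a trigraph: the least `d` such that it admits a `d`-sequence. -/
noncomputable def tww (G : Trigraph V) : ℕ := sInf {d | G.HasSeq d}

end Trigraph

/-- The trigraph induced by a simple graph `G` on the vertex set `s`: all edges black. -/
def SimpleGraph.toTrigraphOn {V : Type*} (G : SimpleGraph V) (s : Finset V) : Trigraph V where
  verts := s
  black u v := G.Adj u v ∧ u ∈ s ∧ v ∈ s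
  red _ _ := False
  black_symm := fun _ _ ⟨h, hu, hv⟩ => ⟨h.symm, hv, hu⟩
  red_symm := fun _ _ h => h.elim
  black_irrefl := fun u h => G.loopless.irrefl u h.1
  red_irrefl := fun _ h => h
  black_red_disjoint := fun _ _ _ h => h
  black_mem := fun _ _ ⟨_, hu, hv⟩ => ⟨hu, hv⟩
  red_mem := fun _ _ h => h.elim

/-- The trigraph associated to a finite simple graph: all edges black. -/
def SimpleGraph.toTrigraph {V : Type*} [Fintype V] (G : SimpleGraph V) : Trigraph V :=
  G.toTrigraphOn Finset.univ

/-- The Cayley graph of a group `Γ` with respect to a set `S` of generators. -/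
def cayley (Γ : Type*) [Group Γ] (S : Finset Γ) : SimpleGraph Γ where
  Adj x y := x ≠ y ∧ ∃ s ∈ S, y = x * s ∨ x = y * s
  symm := ⟨by rintro x y ⟨hne, s, hs, h⟩; exact ⟨hne.symm, s, hs, h.symm⟩⟩
  loopless := ⟨fun x h => h.1 rfl⟩

/-! Fix a finite `s ⊆ Γ`, let `k` bound the length of the generators in `S'` as words in
`S ∪ S⁻¹`, and let `B` be the `k`-neighbourhood of `s` in `Cay(Γ, S)`. Run a `d`-sequence of
`Cay(Γ, S)[B]` and restrict each partition of `B` to `s`: this is a contraction sequence of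
`Cay(Γ, S')[s]`, once the contractions of parts not both meeting `s` are skipped. Two parts of
`s` joined by a red edge contain the ends of an `S'`-edge, that is of a walk of length at most
`k` in `Cay(Γ, S)[B]`, so the corresponding parts of `B` lie at distance at most `k` in the
quotient of `Cay(Γ, S)[B]`. In that quotient every part has at most `2|S|` black neighbours (all
of them meet the neighbourhood of any single vertex of the part) and at most `d` red ones, so the
red degrees along the restricted sequence are at most `(2|S| + d + 1)^k`. -/

theorem Function.update_id_eq_iff {W : Type*} [DecidableEq W] {u v w c : W} :
    Function.update id v u w = c ↔ (w = v ∧ u = c) ∨ (w = c ∧ c ≠ v) := by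
  by_cases hw : w = v <;> simp only [Function.update_apply, hw, if_true, if_false, id] <;> grind

theorem Equiv.Perm.comp_update_id {V : Type*} [DecidableEq V] (τ : Equiv.Perm V) (u v : V) :
    ⇑τ ∘ Function.update id v u = Function.update id (τ v) (τ u) ∘ ⇑τ := by
  rw [Function.comp_update, Function.update_comp_eq_of_injective _ τ.injective]
  rfl

theorem Equiv.swap_update_id_of_ne {V : Type*} [DecidableEq V] {u v w : V} (hw : w ≠ u) :
    Equiv.swap u v (Function.update id v u w) = w := by
  by_cases hwv : w = v
  · rw [hwv, Function.update_self, Equiv.swap_apply_left]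
  · rw [Function.update_of_ne hwv, id, Equiv.swap_apply_of_ne_of_ne hw hwv]

namespace Trigraph

variable {V : Type*} {G G' G₁ G₂ : Trigraph V} {u v x y : V} {d e : ℕ}

theorem ext {G H : Trigraph V} (hv : G.verts = H.verts) (hb : ∀ x y, G.black x y ↔ H.black x y)
    (hr : ∀ x y, G.red x y ↔ H.red x y) : G = H := by
  cases G; cases H
  simp only [mk.injEq]
  exact ⟨hv, funext₂ fun x y => propext (hb x y), funext₂ fun x y => propext (hr x y)⟩

theorem redDeg_le_card_of_subset {F : Finset V} (h : ∀ y, G.red x y → y ∈ F) :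
    G.redDeg x ≤ F.card := by
  rw [← Set.ncard_coe_finset]
  exact Set.ncard_le_ncard h F.finite_toSet

theorem redDegLE_card_verts (G : Trigraph V) : G.RedDegLE G.verts.card :=
  fun _ => redDeg_le_card_of_subset fun _ h => (G.red_mem _ _ h).2

theorem RedDegLE.mono (h : G.RedDegLE d) (hde : d ≤ e) : G.RedDegLE e :=
  fun x => (h x).trans hde

theorem redDegLE_of_card_le_one (h : G.verts.card ≤ 1) (d : ℕ) : G.RedDegLE d := by
  refine fun x => le_trans (redDeg_le_card_of_subset (F := ∅) fun y hxy => ?_) (Nat.zero_le d)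
  obtain ⟨hx, hy⟩ := G.red_mem _ _ hxy
  exact absurd (Finset.card_le_one.1 h x hx y hy ▸ hxy) (G.red_irrefl x)

noncomputable def nbrs (G : Trigraph V) (x : V) : Finset V := by
  classical exact G.verts.filter fun y => G.black x y ∨ G.red x y

theorem mem_nbrs : y ∈ G.nbrs x ↔ G.black x y ∨ G.red x y := by
  classical
  simp only [nbrs, Finset.mem_filter, and_iff_right_iff_imp]
  rintro (h | h)
  exacts [(G.black_mem _ _ h).2, (G.red_mem _ _ h).2]

theorem card_nbrs_le {A : Finset V} (hA : ∀ y, G.black x y → y ∈ A) (hd : G.RedDegLE d) :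
    (G.nbrs x).card ≤ A.card + d := by
  classical
  let R := G.verts.filter (G.red x ·)
  have hR : R.card ≤ d := by
    refine le_trans (le_of_eq ?_) (hd x)
    rw [redDeg, ← Set.ncard_coe_finset]
    congr 1
    ext y
    simpa [R] using fun h => (G.red_mem _ _ h).2
  calc (G.nbrs x).card ≤ (A ∪ R).card := by
        refine Finset.card_le_card fun y hy => ?_
        rcases mem_nbrs.1 hy with h | h
        · exact Finset.mem_union_left _ (hA y h)
        · exact Finset.mem_union_right _ (Finset.mem_filter.2 ⟨(G.red_mem _ _ h).2, h⟩)
    _ ≤ A.card + R.card := Finset.card_union_le _ _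
    _ ≤ A.card + d := by omega

variable [DecidableEq V]

theorem IsContractionAt.card_verts (h : G.IsContractionAt G' u v) :
    G'.verts.card = G.verts.card - 1 := by
  rw [h.2.2.2.1, Finset.card_erase_of_mem h.2.1]

private theorem iff_of_iff_of_ne {R₁ R₂ : V → V → Prop}
    (hs₁ : ∀ x y, R₁ x y → R₁ y x) (hs₂ : ∀ x y, R₂ x y → R₂ y x)
    (hi₁ : ∀ x, ¬ R₁ x x) (hi₂ : ∀ x, ¬ R₂ x x) (hv₁ : ∀ x, ¬ R₁ x v) (hv₂ : ∀ x, ¬ R₂ x v)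
    (h : ∀ x y, y ≠ u → y ≠ v → (R₁ x y ↔ R₂ x y)) (x y : V) :
    R₁ x y ↔ R₂ x y := by
  by_cases hyv : y = v
  · rw [hyv]; exact iff_of_false (hv₁ x) (hv₂ x)
  by_cases hyu : y = u
  · rw [hyu]
    by_cases hxu : x = u
    · rw [hxu]; exact iff_of_false (hi₁ u) (hi₂ u)
    by_cases hxv : x = v
    · rw [hxv]
      exact iff_of_false (fun h => hv₁ u (hs₁ _ _ h)) (fun h => hv₂ u (hs₂ _ _ h))
    exact ⟨fun h' => hs₂ _ _ ((h u x hxu hxv).1 (hs₁ _ _ h')),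
      fun h' => hs₁ _ _ ((h u x hxu hxv).2 (hs₂ _ _ h'))⟩
  exact h x y hyu hyv

theorem IsContractionAt.unique (h₁ : G.IsContractionAt G₁ u v)
    (h₂ : G.IsContractionAt G₂ u v) : G₁ = G₂ := by
  obtain ⟨-, -, -, hV₁, hb₁, hr₁, hbu₁, hru₁⟩ := h₁
  obtain ⟨-, -, -, hV₂, hb₂, hr₂, hbu₂, hru₂⟩ := h₂
  have hnotv : ∀ {T : Trigraph V}, T.verts = G.verts.erase v → v ∉ T.verts := fun h => by
    simp [h]
  refine ext (hV₁.trans hV₂.symm)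
    (iff_of_iff_of_ne (u := u) G₁.black_symm G₂.black_symm G₁.black_irrefl G₂.black_irrefl
      (fun x h => hnotv hV₁ (G₁.black_mem x v h).2)
      (fun x h => hnotv hV₂ (G₂.black_mem x v h).2) fun x y hyu hyv => ?_)
    (iff_of_iff_of_ne (u := u) G₁.red_symm G₂.red_symm G₁.red_irrefl G₂.red_irrefl
      (fun x h => hnotv hV₁ (G₁.red_mem x v h).2)
      (fun x h => hnotv hV₂ (G₂.red_mem x v h).2) fun x y hyu hyv => ?_)
  · by_cases hxu : x = u
    · subst hxu; rw [hbu₁ y hyu hyv, hbu₂ y hyu hyv]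
    · rw [hb₁ x y hxu hyu, hb₂ x y hxu hyu]
  · by_cases hxu : x = u
    · subst hxu; rw [hru₁ y hyu hyv, hru₂ y hyu hyv]
    · rw [hr₁ x y hxu hyu, hr₂ x y hxu hyu]

theorem HasSeq.mono (h : G.HasSeq d) (hde : d ≤ e) : G.HasSeq e := by
  obtain ⟨f, hf, hstep, hred⟩ := h
  exact ⟨f, hf, hstep, fun i hi hin => (hred i hi hin).mono hde⟩

theorem hasSeq_of_card_le_one (h : G.verts.card ≤ 1) (d : ℕ) : G.HasSeq d :=
  ⟨fun _ => G, rfl, fun _ hi hin => by omega, fun _ _ _ => redDegLE_of_card_le_one h d⟩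

theorem HasSeq.of_isContractionAt (hC : G.IsContractionAt G' u v) (hred : G.RedDegLE d)
    (h' : G'.HasSeq d) : G.HasSeq d := by
  obtain ⟨f, hf, hstep, hbd⟩ := h'
  have hcard := hC.card_verts
  have hpos : 0 < G.verts.card := Finset.card_pos.2 ⟨u, hC.1⟩
  refine ⟨Function.update f G.verts.card G, by simp, fun i hi hin => ?_, fun i hi hin => ?_⟩
  · rw [Function.update_of_ne (show i ≠ G.verts.card by omega)]
    by_cases hlast : i + 1 = G.verts.card
    · rw [hlast, Function.update_self, show i = G'.verts.card by omega, hf]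
      exact ⟨u, v, hC⟩
    · rw [Function.update_of_ne hlast]
      exact hstep i hi (by omega)
  · by_cases hlast : i = G.verts.card
    · rwa [hlast, Function.update_self]
    · rw [Function.update_of_ne hlast]
      exact hbd i hi (by omega)

theorem HasSeq.exists_isContractionAt (h : G.HasSeq d) (hcard : 2 ≤ G.verts.card) :
    G.RedDegLE d ∧ ∃ G' u v, G.IsContractionAt G' u v ∧ G'.HasSeq d := by
  obtain ⟨f, hf, hstep, hred⟩ := h
  obtain ⟨u, v, hC⟩ := hstep (G.verts.card - 1) (by omega) (by omega)
  rw [Nat.sub_add_cancel (by omega), hf] at hC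
  have hcard' : (f (G.verts.card - 1)).verts.card = G.verts.card - 1 := hC.card_verts
  refine ⟨hf ▸ hred _ (by omega) le_rfl, _, u, v, hC, f, by rw [hcard'],
    fun i hi hin => hstep i hi (by omega), fun i hi hin => hred i hi (by omega)⟩

theorem tww_le_of_hasSeq (h : G.HasSeq d) : G.tww ≤ d := Nat.sInf_le h

theorem hasSeq_of_tww_le (hne : ∃ e, G.HasSeq e) (h : G.tww ≤ d) : G.HasSeq d :=
  HasSeq.mono (Nat.sInf_mem hne) h

end Trigraph

namespace SimpleGraph

variable {V W : Type*} (G : SimpleGraph V) (s : Finset V) (φ : V → W)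

def FibersAdj (a b : W) : Prop := ∃ x ∈ s, ∃ y ∈ s, φ x = a ∧ φ y = b ∧ G.Adj x y

def FibersComplete (a b : W) : Prop := ∀ x ∈ s, ∀ y ∈ s, φ x = a → φ y = b → G.Adj x y

variable {G s φ}

theorem FibersAdj.symm {a b : W} (h : G.FibersAdj s φ a b) : G.FibersAdj s φ b a :=
  let ⟨x, hx, y, hy, hxa, hyb, hxy⟩ := h
  ⟨y, hy, x, hx, hyb, hxa, hxy.symm⟩

theorem FibersComplete.symm {a b : W} (h : G.FibersComplete s φ a b) :
    G.FibersComplete s φ b a :=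
  fun x hx y hy hxb hya => (h y hy x hx hya hxb).symm

theorem FibersAdj.mem_image [DecidableEq W] {a b : W} (h : G.FibersAdj s φ a b) :
    a ∈ s.image φ ∧ b ∈ s.image φ :=
  let ⟨x, hx, y, hy, hxa, hyb, _⟩ := h
  ⟨Finset.mem_image.2 ⟨x, hx, hxa⟩, Finset.mem_image.2 ⟨y, hy, hyb⟩⟩

theorem FibersComplete.fibersAdj [DecidableEq W] {a b : W} (h : G.FibersComplete s φ a b)
    (ha : a ∈ s.image φ) (hb : b ∈ s.image φ) : G.FibersAdj s φ a b := by
  obtain ⟨x, hx, rfl⟩ := Finset.mem_image.1 ha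
  obtain ⟨y, hy, rfl⟩ := Finset.mem_image.1 hb
  exact ⟨x, hx, y, hy, rfl, rfl, h x hx y hy rfl rfl⟩

theorem fibersAdj_comp {W' : Type*} (r : W → W') {a' b' : W'} :
    G.FibersAdj s (r ∘ φ) a' b' ↔ ∃ a b, r a = a' ∧ r b = b' ∧ G.FibersAdj s φ a b := by
  constructor
  · rintro ⟨x, hx, y, hy, hxa, hyb, hxy⟩
    exact ⟨φ x, φ y, hxa, hyb, x, hx, y, hy, rfl, rfl, hxy⟩
  · rintro ⟨_, _, rfl, rfl, x, hx, y, hy, rfl, rfl, hxy⟩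
    exact ⟨x, hx, y, hy, rfl, rfl, hxy⟩

theorem fibersComplete_comp {W' : Type*} (r : W → W') {a' b' : W'} :
    G.FibersComplete s (r ∘ φ) a' b' ↔
      ∀ a b, r a = a' → r b = b' → G.FibersComplete s φ a b := by
  constructor
  · rintro h a b rfl rfl x hx y hy rfl rfl
    exact h x hx y hy rfl rfl
  · intro h x hx y hy hxa hyb
    exact h _ _ hxa hyb x hx y hy rfl rfl

variable [DecidableEq W]

variable (G s φ) in
/-- The trigraph obtained from `G[s]` by contracting each fibre of `φ`; the fibre over `a` becomes
the vertex `a`. -/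
def quotientTrigraph : Trigraph W where
  verts := s.image φ
  black a b := a ≠ b ∧ a ∈ s.image φ ∧ b ∈ s.image φ ∧ G.FibersComplete s φ a b
  red a b := a ≠ b ∧ G.FibersAdj s φ a b ∧ ¬ G.FibersComplete s φ a b
  black_symm _ _ h := ⟨h.1.symm, h.2.2.1, h.2.1, h.2.2.2.symm⟩
  red_symm _ _ h := ⟨h.1.symm, h.2.1.symm, fun h' => h.2.2 h'.symm⟩
  black_irrefl _ h := h.1 rfl
  red_irrefl _ h := h.1 rfl
  black_red_disjoint _ _ hb hr := hr.2.2 hb.2.2.2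
  black_mem _ _ h := ⟨h.2.1, h.2.2.1⟩
  red_mem _ _ h := h.2.1.mem_image

theorem quotientTrigraph_black_or_red_iff {a b : W} (hab : a ≠ b) :
    (G.quotientTrigraph s φ).black a b ∨ (G.quotientTrigraph s φ).red a b ↔
      G.FibersAdj s φ a b := by
  refine ⟨?_, fun h => ?_⟩
  · rintro (⟨-, ha, hb, h⟩ | ⟨-, h, -⟩)
    exacts [h.fibersAdj ha hb, h]
  · by_cases hc : G.FibersComplete s φ a b
    · exact Or.inl ⟨hab, h.mem_image.1, h.mem_image.2, hc⟩
    · exact Or.inr ⟨hab, h, hc⟩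

variable (G s) in
theorem quotientTrigraph_id [DecidableEq V] : G.quotientTrigraph s id = G.toTrigraphOn s := by
  refine Trigraph.ext Finset.image_id (fun a b => ?_) (fun a b => ?_)
  · simp only [quotientTrigraph, SimpleGraph.toTrigraphOn, FibersComplete, Finset.image_id, id]
    constructor
    · rintro ⟨-, ha, hb, h⟩
      exact ⟨h a ha b hb rfl rfl, ha, hb⟩
    · rintro ⟨hab, ha, hb⟩
      exact ⟨hab.ne, ha, hb, by rintro x - y - rfl rfl; exact hab⟩
  · simp only [quotientTrigraph, SimpleGraph.toTrigraphOn, iff_false]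
    rintro ⟨-, ⟨x, -, y, -, rfl, rfl, hxy⟩, hc⟩
    exact hc fun x' _ y' _ (hx : x' = x) (hy : y' = y) => hx ▸ hy ▸ hxy

theorem quotientTrigraph_congr {φ' : V → W} (h : Set.EqOn φ φ' s) :
    G.quotientTrigraph s φ = G.quotientTrigraph s φ' := by
  have hAdj (a b : W) : G.FibersAdj s φ a b ↔ G.FibersAdj s φ' a b :=
    exists_congr fun x => and_congr_right fun hx =>
      exists_congr fun y => and_congr_right fun hy => by rw [h hx, h hy]
  have hComplete (a b : W) : G.FibersComplete s φ a b ↔ G.FibersComplete s φ' a b :=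
    forall₂_congr fun x hx => forall₂_congr fun y hy => by rw [h hx, h hy]
  have himage : s.image φ = s.image φ' := Finset.image_congr h
  refine Trigraph.ext himage (fun a b => ?_) (fun a b => ?_)
  · simp only [quotientTrigraph, himage, hComplete]
  · simp only [quotientTrigraph, hAdj, hComplete]

theorem image_update_id_comp {u v : W} (hu : u ∈ s.image φ) (huv : u ≠ v) :
    s.image (Function.update id v u ∘ φ) = (s.image φ).erase v := by
  ext c
  simp only [Finset.mem_image, Finset.mem_erase, Function.comp_apply, Function.update_id_eq_iff]
  constructor
  · rintro ⟨x, hx, ⟨-, rfl⟩ | ⟨rfl, hxv⟩⟩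
    exacts [⟨huv, Finset.mem_image.1 hu⟩, ⟨hxv, x, hx, rfl⟩]
  · rintro ⟨hcv, x, hx, rfl⟩
    exact ⟨x, hx, Or.inr ⟨rfl, hcv⟩⟩

variable {u v : W}

theorem fibersComplete_update_id_comp {x y : W} (hxu : x ≠ u) (hxv : x ≠ v) (hyu : y ≠ u)
    (hyv : y ≠ v) :
    G.FibersComplete s (Function.update id v u ∘ φ) x y ↔ G.FibersComplete s φ x y := by
  simp [fibersComplete_comp, Function.update_id_eq_iff, hxu.symm, hyu.symm, hxv, hyv]

theorem fibersComplete_update_id_comp_left (huv : u ≠ v) {x : W} (hxu : x ≠ u) (hxv : x ≠ v) :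
    G.FibersComplete s (Function.update id v u ∘ φ) u x ↔
      G.FibersComplete s φ u x ∧ G.FibersComplete s φ v x := by
  simp [fibersComplete_comp, Function.update_id_eq_iff, hxu.symm, hxv, huv, or_imp, forall_and,
    and_comm]

theorem fibersAdj_update_id_comp {x y : W} (hxu : x ≠ u) (hxv : x ≠ v) (hyu : y ≠ u)
    (hyv : y ≠ v) :
    G.FibersAdj s (Function.update id v u ∘ φ) x y ↔ G.FibersAdj s φ x y := by
  simp [fibersAdj_comp, Function.update_id_eq_iff, hxu.symm, hyu.symm, hxv, hyv]

theorem fibersAdj_update_id_comp_left (huv : u ≠ v) {x : W} (hxu : x ≠ u) (hxv : x ≠ v) :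
    G.FibersAdj s (Function.update id v u ∘ φ) u x ↔
      G.FibersAdj s φ u x ∨ G.FibersAdj s φ v x := by
  simp [fibersAdj_comp, Function.update_id_eq_iff, hxu.symm, hxv, huv, or_and_right, exists_or,
    or_comm]

theorem isContractionAt_quotientTrigraph (hu : u ∈ s.image φ) (hv : v ∈ s.image φ)
    (huv : u ≠ v) :
    (G.quotientTrigraph s φ).IsContractionAt
      (G.quotientTrigraph s (Function.update id v u ∘ φ)) u v := by
  have himage := image_update_id_comp hu huv
  have hnotv : ∀ {y}, ¬ G.FibersAdj s (Function.update id v u ∘ φ) v y := fun h => by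
    simpa [himage] using h.mem_image.1
  have hnotv' : ∀ {y}, ¬ G.FibersAdj s (Function.update id v u ∘ φ) y v :=
    fun h => hnotv h.symm
  refine ⟨hu, hv, huv, himage, fun x y hxu hyu => ?_, fun x y hxu hyu => ?_,
    fun x hxu hxv => ?_, fun x hxu hxv => ?_⟩
  · by_cases hxv : x = v
    · simp [quotientTrigraph, himage, hxv]
    by_cases hyv : y = v
    · simp [quotientTrigraph, himage, hyv]
    simp only [quotientTrigraph, himage, Finset.mem_erase,
      fibersComplete_update_id_comp hxu hxv hyu hyv]
    tauto
  · by_cases hxv : x = v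
    · simp [quotientTrigraph, hxv, hnotv]
    by_cases hyv : y = v
    · simp [quotientTrigraph, hyv, hnotv']
    simp only [quotientTrigraph, fibersAdj_update_id_comp hxu hxv hyu hyv,
      fibersComplete_update_id_comp hxu hxv hyu hyv]
    tauto
  · simp only [quotientTrigraph, himage, Finset.mem_erase,
      fibersComplete_update_id_comp_left huv hxu hxv]
    have := hxu.symm
    have := hxv.symm
    tauto
  · by_cases hx : x ∈ s.image φ
    · have hFu : G.FibersComplete s φ u x → G.FibersAdj s φ u x := (·.fibersAdj hu hx)
      have hFv : G.FibersComplete s φ v x → G.FibersAdj s φ v x := (·.fibersAdj hv hx)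
      simp only [quotientTrigraph, fibersAdj_update_id_comp_left huv hxu hxv,
        fibersComplete_update_id_comp_left huv hxu hxv]
      have := hxu.symm
      have := hxv.symm
      tauto
    · have hnx : ∀ {a}, ¬ G.FibersAdj s φ a x := fun h => hx h.mem_image.2
      simp only [quotientTrigraph, hx, hnx, fibersAdj_update_id_comp_left huv hxu hxv, and_false,
        false_and, or_self]


theorem quotientTrigraph_hasSeq_card :
    (G.quotientTrigraph s φ).HasSeq (s.image φ).card := by
  induction hn : (s.image φ).card generalizing φ with
  | zero => exact Trigraph.hasSeq_of_card_le_one (by simp [quotientTrigraph, hn]) 0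
  | succ n ih =>
    rcases Nat.lt_or_ge n 1 with hn1 | hn1
    · exact Trigraph.hasSeq_of_card_le_one (by simp [quotientTrigraph]; omega) _
    obtain ⟨u, hu, v, hv, huv⟩ := Finset.one_lt_card.1 (show 1 < (s.image φ).card by omega)
    have hC := G.isContractionAt_quotientTrigraph hu hv huv
    have hcard : (s.image (Function.update id v u ∘ φ)).card = n := by
      rw [image_update_id_comp hu huv, Finset.card_erase_of_mem hv, hn, Nat.add_sub_cancel]
    refine Trigraph.HasSeq.of_isContractionAt hC ?_ ((ih hcard).mono n.le_succ)
    simpa [quotientTrigraph, hn] using (G.quotientTrigraph s φ).redDegLE_card_verts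

end SimpleGraph

section iterNbhd

variable {α β : Type*} [DecidableEq α] {N : α → Finset α} {s t : Finset α} {j k : ℕ}

def iterNbhd (N : α → Finset α) (k : ℕ) (t : Finset α) : Finset α :=
  (fun t => t ∪ t.biUnion N)^[k] t

theorem iterNbhd_succ : iterNbhd N (k + 1) t = iterNbhd N k t ∪ (iterNbhd N k t).biUnion N :=
  Function.iterate_succ_apply' _ _ _

theorem iterNbhd_succ' : iterNbhd N (k + 1) t = iterNbhd N k (t ∪ t.biUnion N) :=
  Function.iterate_succ_apply _ _ _

theorem iterNbhd_mono (h : s ⊆ t) : iterNbhd N k s ⊆ iterNbhd N k t := by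
  induction k with
  | zero => exact h
  | succ k ih =>
    rw [iterNbhd_succ, iterNbhd_succ]
    exact Finset.union_subset_union ih (Finset.biUnion_subset_biUnion_of_subset_left _ ih)

theorem iterNbhd_subset_iterNbhd_of_le (h : j ≤ k) : iterNbhd N j t ⊆ iterNbhd N k t := by
  induction k, h using Nat.le_induction with
  | base => exact subset_rfl
  | succ k _ ih => exact ih.trans (iterNbhd_succ (N := N) ▸ Finset.subset_union_left)

theorem subset_iterNbhd : t ⊆ iterNbhd N k t :=
  iterNbhd_subset_iterNbhd_of_le (Nat.zero_le k)

theorem mem_iterNbhd_succ {x y : α} (hx : x ∈ iterNbhd N k t) (hy : y ∈ N x) :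
    y ∈ iterNbhd N (k + 1) t := by
  rw [iterNbhd_succ]
  exact Finset.mem_union_right _ (Finset.mem_biUnion.2 ⟨x, hx, hy⟩)

theorem card_iterNbhd_le {D : ℕ} (hN : ∀ x, (N x).card ≤ D) :
    (iterNbhd N k t).card ≤ t.card * (D + 1) ^ k := by
  induction k with
  | zero => simp [iterNbhd]
  | succ k ih =>
    rw [iterNbhd_succ]
    calc _ ≤ (iterNbhd N k t).card + ∑ x ∈ iterNbhd N k t, (N x).card :=
          (Finset.card_union_le _ _).trans (Nat.add_le_add_left Finset.card_biUnion_le _)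
      _ ≤ (iterNbhd N k t).card + (iterNbhd N k t).card * D :=
          Nat.add_le_add_left (by simpa using Finset.sum_le_card_nsmul _ _ _ fun x _ => hN x) _
      _ = (iterNbhd N k t).card * (D + 1) := by ring
      _ ≤ t.card * (D + 1) ^ (k + 1) := by
          rw [pow_succ, ← mul_assoc]
          exact Nat.mul_le_mul_right _ ih

theorem image_iterNbhd_subset [DecidableEq β] {M : β → Finset β} {φ : α → β}
    {B : Finset α} (h : ∀ x ∈ B, ∀ y ∈ N x, y ∈ B → φ y = φ x ∨ φ y ∈ M (φ x))
    (hB : iterNbhd N k t ⊆ B) :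
    (iterNbhd N k t).image φ ⊆ iterNbhd M k (t.image φ) := by
  induction k with
  | zero => exact subset_rfl
  | succ k ih =>
    have hk : iterNbhd N k t ⊆ B := (iterNbhd_subset_iterNbhd_of_le k.le_succ).trans hB
    have hsucc : iterNbhd M k (t.image φ) ⊆ iterNbhd M (k + 1) (t.image φ) :=
      iterNbhd_subset_iterNbhd_of_le k.le_succ
    intro b hb
    obtain ⟨y, hy, rfl⟩ := Finset.mem_image.1 hb
    rw [iterNbhd_succ, Finset.mem_union, Finset.mem_biUnion] at hy
    rcases hy with hy | ⟨x, hx, hyx⟩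
    · exact hsucc (ih hk (Finset.mem_image_of_mem φ hy))
    · have hφx := ih hk (Finset.mem_image_of_mem φ hx)
      rcases h x (hk hx) y hyx (hB (mem_iterNbhd_succ hx hyx)) with hxy | hxy
      · exact hsucc (hxy ▸ hφx)
      · exact mem_iterNbhd_succ hφx hxy

end iterNbhd

section Cayley

open scoped Pointwise

variable {Γ : Type*} [Group Γ] [DecidableEq Γ] {S : Finset Γ}

theorem cayley_adj_iff {x y : Γ} (hxy : x ≠ y) :
    (cayley Γ S).Adj x y ↔ y ∈ (S ∪ S⁻¹).image (x * ·) := by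
  simp only [cayley, Finset.mem_image, Finset.mem_union, Finset.mem_inv', hxy, ne_eq,
    not_false_eq_true, true_and]
  constructor
  · rintro ⟨g, hg, rfl | rfl⟩
    · exact ⟨g, Or.inl hg, rfl⟩
    · exact ⟨g⁻¹, Or.inr (by simpa using hg), by group⟩
  · rintro ⟨g, hg | hg, rfl⟩
    · exact ⟨g, hg, Or.inl rfl⟩
    · exact ⟨g⁻¹, hg, Or.inr (by group)⟩

theorem mul_list_prod_mem_iterNbhd {A : Finset Γ} {l : List Γ} (hl : ∀ g ∈ l, g ∈ A)
    (x : Γ) :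
    x * l.prod ∈ iterNbhd (fun x => A.image (x * ·)) l.length {x} := by
  induction l generalizing x with
  | nil => simp [iterNbhd]
  | cons g l ih =>
    rw [List.prod_cons, ← mul_assoc, List.length_cons, iterNbhd_succ']
    refine iterNbhd_mono (fun y hy => ?_) (ih (fun g' hg' => hl g' (List.mem_cons_of_mem g hg')) _)
    rw [Finset.mem_singleton.1 hy]
    exact Finset.mem_union_right _ (Finset.mem_biUnion.2 ⟨x, Finset.mem_singleton_self x,
      Finset.mem_image.2 ⟨g, hl g List.mem_cons_self, rfl⟩⟩)

theorem exists_cayley_adj_mem_iterNbhd (hS : Subgroup.closure (S : Set Γ) = ⊤)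
    (S' : Finset Γ) :
    ∃ k, ∀ x y, (cayley Γ S').Adj x y →
      y ∈ iterNbhd (fun x => (S ∪ S⁻¹).image (x * ·)) k {x} := by
  have hword : ∀ t : Γ, ∃ l : List Γ, (∀ g ∈ l, g ∈ S ∪ S⁻¹) ∧ l.prod = t := by
    intro t
    have ht : t ∈ (Subgroup.closure (S : Set Γ)).toSubmonoid := hS ▸ Subgroup.mem_top t
    rw [Subgroup.closure_toSubmonoid] at ht
    simpa [← Finset.coe_inv, ← Finset.coe_union] using Submonoid.exists_list_of_mem_closure ht
  choose word hword_mem hword_prod using hword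
  refine ⟨(S' ∪ S'⁻¹).sup fun t => (word t).length, fun x y hxy => ?_⟩
  obtain ⟨t, ht, rfl⟩ := Finset.mem_image.1 ((cayley_adj_iff hxy.ne).1 hxy)
  rw [← hword_prod t]
  exact iterNbhd_subset_iterNbhd_of_le (Finset.le_sup (f := fun t => (word t).length) ht)
    (mul_list_prod_mem_iterNbhd (hword_mem t) x)

end Cayley

namespace SimpleGraph

open Trigraph

variable {V : Type*} [DecidableEq V] {G G' : SimpleGraph V} {N : V → Finset V} {B s : Finset V}
  {φ : V → V} {Δ d k : ℕ}

theorem card_nbrs_quotientTrigraph_le (hN : ∀ x y, x ≠ y → (G.Adj x y ↔ y ∈ N x))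
    (hΔ : ∀ x, (N x).card ≤ Δ)
    (hd : (G.quotientTrigraph B φ).RedDegLE d) (a : V) :
    ((G.quotientTrigraph B φ).nbrs a).card ≤ Δ + d := by
  by_cases ha : ∃ x ∈ B, φ x = a
  · obtain ⟨x, hx, rfl⟩ := ha
    refine (card_nbrs_le (A := (N x).image φ) (fun b hb => ?_) hd).trans
      (Nat.add_le_add_right (Finset.card_image_le.trans (hΔ x)) d)
    obtain ⟨hne, -, hbB, hc⟩ := hb
    obtain ⟨y, hy, rfl⟩ := Finset.mem_image.1 hbB
    have hxy := hc x hx y hy rfl rfl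
    exact Finset.mem_image_of_mem φ ((hN x y hxy.ne).1 hxy)
  · have hA : ∀ b, (G.quotientTrigraph B φ).black a b → b ∈ (∅ : Finset V) :=
      fun b hb => absurd (Finset.mem_image.1 hb.2.1) ha
    exact (card_nbrs_le hA hd).trans (by simp)

theorem mem_nbrs_quotientTrigraph (hN : ∀ x y, x ≠ y → (G.Adj x y ↔ y ∈ N x)) {x y : V}
    (hx : x ∈ B) (hy : y ∈ B) (hxy : y ∈ N x) :
    φ y = φ x ∨ φ y ∈ (G.quotientTrigraph B φ).nbrs (φ x) := by
  refine or_iff_not_imp_left.2 fun hne => mem_nbrs.2 ?_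
  have hadj : G.Adj x y := (hN x y fun h => hne (h ▸ rfl)).2 hxy
  exact (quotientTrigraph_black_or_red_iff (Ne.symm hne)).2 ⟨x, hx, y, hy, rfl, rfl, hadj⟩

/-- The red neighbours of a fibre in the quotient of `G'[s]` lie within distance `k` of it in
the quotient of `G[N^k[s]]`, whose vertices all have degree at most `Δ + d`. -/
theorem redDegLE_quotientTrigraph (hN : ∀ x y, x ≠ y → (G.Adj x y ↔ y ∈ N x))
    (hΔ : ∀ x, (N x).card ≤ Δ) (hG' : ∀ x y, G'.Adj x y → y ∈ iterNbhd N k {x})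
    (hd : (G.quotientTrigraph (iterNbhd N k s) φ).RedDegLE d)
    (τ : Equiv.Perm V) : (G'.quotientTrigraph s (τ ∘ φ)).RedDegLE ((Δ + d + 1) ^ k) := by
  intro a
  let M := (G.quotientTrigraph (iterNbhd N k s) φ).nbrs
  refine (redDeg_le_card_of_subset (F := (iterNbhd M k {τ.symm a}).image τ) fun c hc => ?_).trans
    ((Finset.card_image_le.trans (card_iterNbhd_le (card_nbrs_quotientTrigraph_le hN hΔ hd))).trans
      (by simp))
  obtain ⟨-, ⟨x, hx, y, hy, rfl, rfl, hxy⟩, -⟩ := hc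
  have hsub : iterNbhd N k {x} ⊆ iterNbhd N k s :=
    iterNbhd_mono (Finset.singleton_subset_iff.2 hx)
  have hφy := image_iterNbhd_subset
    (fun x' hx' y' hy' hy'B => mem_nbrs_quotientTrigraph hN hx' hy'B hy') hsub
    (Finset.mem_image_of_mem φ (hG' x y hxy))
  rw [Finset.image_singleton] at hφy
  simpa using Finset.mem_image_of_mem τ hφy

theorem card_verts_quotientTrigraph_comp_le (τ : Equiv.Perm V) (hsB : s ⊆ B) :
    (G'.quotientTrigraph s (τ ∘ φ)).verts.card ≤ (B.image φ).card := by
  change (s.image (τ ∘ φ)).card ≤ _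
  rw [← Finset.image_image]
  exact Finset.card_image_le.trans (Finset.card_le_card (Finset.image_subset_image hsB))

/-- The permutation `τ` relabels the parts of `s`: when of two contracted parts `u` and `v` of
`N^k[s]` only `v` meets `s`, nothing is contracted on `s` and that part keeps its name `v`, while
on `N^k[s]` it is renamed `u`. -/
theorem hasSeq_quotientTrigraph_of_hasSeq_update {u v : V}
    (hN : ∀ x y, x ≠ y → (G.Adj x y ↔ y ∈ N x)) (hΔ : ∀ x, (N x).card ≤ Δ)
    (hG' : ∀ x y, G'.Adj x y → y ∈ iterNbhd N k {x}) (huv : u ≠ v)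
    (hred : (G.quotientTrigraph (iterNbhd N k s) φ).RedDegLE d)
    (h : ∀ τ : Equiv.Perm V,
      (G'.quotientTrigraph s (τ ∘ Function.update id v u ∘ φ)).HasSeq ((Δ + d + 1) ^ k))
    (τ : Equiv.Perm V) : (G'.quotientTrigraph s (τ ∘ φ)).HasSeq ((Δ + d + 1) ^ k) := by
  by_cases hvs : v ∈ s.image φ
  · by_cases hus : u ∈ s.image φ
    · have hC := G'.isContractionAt_quotientTrigraph (φ := τ ∘ φ)
        (by simpa [← Finset.image_image] using Finset.mem_image_of_mem τ hus)
        (by simpa [← Finset.image_image] using Finset.mem_image_of_mem τ hvs)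
        (τ.injective.ne huv)
      rw [← Function.comp_assoc, ← Equiv.Perm.comp_update_id, Function.comp_assoc] at hC
      exact (h τ).of_isContractionAt hC (redDegLE_quotientTrigraph hN hΔ hG' hred τ)
    · rw [quotientTrigraph_congr
        (φ' := ⇑(τ * Equiv.swap u v) ∘ Function.update id v u ∘ φ)]
      · exact h _
      · intro x hx
        have hxu : φ x ≠ u := fun h => hus (h ▸ Finset.mem_image_of_mem φ hx)
        simp [Equiv.swap_update_id_of_ne hxu]
  · rw [quotientTrigraph_congr (φ' := τ ∘ Function.update id v u ∘ φ)]
    · exact h τ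
    · intro x hx
      have hxv : φ x ≠ v := fun h => hvs (h ▸ Finset.mem_image_of_mem φ hx)
      simp [Function.update_of_ne hxv]

theorem hasSeq_quotientTrigraph_of_hasSeq (hN : ∀ x y, x ≠ y → (G.Adj x y ↔ y ∈ N x))
    (hΔ : ∀ x, (N x).card ≤ Δ) (hG' : ∀ x y, G'.Adj x y → y ∈ iterNbhd N k {x})
    (hφ : (G.quotientTrigraph (iterNbhd N k s) φ).HasSeq d) (τ : Equiv.Perm V) :
    (G'.quotientTrigraph s (τ ∘ φ)).HasSeq ((Δ + d + 1) ^ k) := by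
  obtain ⟨n, hn⟩ : ∃ n, ((iterNbhd N k s).image φ).card = n := ⟨_, rfl⟩
  induction n using Nat.strong_induction_on generalizing φ τ with
  | _ n ih =>
    rcases Nat.lt_or_ge n 2 with hn2 | hn2
    · exact hasSeq_of_card_le_one
        ((card_verts_quotientTrigraph_comp_le τ subset_iterNbhd).trans (by rw [hn]; omega)) _
    obtain ⟨hred, T, u, v, hC, hT⟩ := hφ.exists_isContractionAt (hn ▸ hn2)
    obtain ⟨hu, hv, huv⟩ :
        u ∈ (iterNbhd N k s).image φ ∧ v ∈ (iterNbhd N k s).image φ ∧ u ≠ v :=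
      ⟨hC.1, hC.2.1, hC.2.2.1⟩
    rw [hC.unique (isContractionAt_quotientTrigraph hu hv huv)] at hT
    refine hasSeq_quotientTrigraph_of_hasSeq_update hN hΔ hG' huv hred
      (fun τ => ih (n - 1) (by omega) hT τ ?_) τ
    rw [image_update_id_comp hu huv, Finset.card_erase_of_mem hv, hn]

theorem tww_toTrigraphOn_le (hN : ∀ x y, x ≠ y → (G.Adj x y ↔ y ∈ N x))
    (hΔ : ∀ x, (N x).card ≤ Δ) (hG' : ∀ x y, G'.Adj x y → y ∈ iterNbhd N k {x})
    (hd : ∀ t, (G.toTrigraphOn t).tww ≤ d) (s : Finset V) :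
    (G'.toTrigraphOn s).tww ≤ (Δ + d + 1) ^ k := by
  have hB : (G.quotientTrigraph (iterNbhd N k s) id).HasSeq d := by
    rw [quotientTrigraph_id]
    refine hasSeq_of_tww_le ⟨((iterNbhd N k s).image id).card, ?_⟩ (hd _)
    rw [← quotientTrigraph_id]
    exact quotientTrigraph_hasSeq_card
  have hs := hasSeq_quotientTrigraph_of_hasSeq hN hΔ hG' hB 1
  rw [Equiv.Perm.coe_one, Function.id_comp, quotientTrigraph_id] at hs
  exact tww_le_of_hasSeq hs

end SimpleGraph

theorem twin_width_group_invariant_general (Γ : Type*) [Group Γ] [DecidableEq Γ] (S S' : Finset Γ)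
    (hS : Subgroup.closure (S : Set Γ) = ⊤) (hS' : Subgroup.closure ((S' : Set Γ)) = ⊤) :
    (∃ d, ∀ s : Finset Γ, Trigraph.tww ((cayley Γ S).toTrigraphOn s) ≤ d) ↔
    (∃ d', ∀ s : Finset Γ, Trigraph.tww ((cayley Γ S').toTrigraphOn s) ≤ d') := by
  have transfer : ∀ T T' : Finset Γ, Subgroup.closure (T : Set Γ) = ⊤ →
      (∃ d, ∀ s, ((cayley Γ T).toTrigraphOn s).tww ≤ d) →
      ∃ d', ∀ s, ((cayley Γ T').toTrigraphOn s).tww ≤ d' := by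
    rintro T T' hT ⟨d, hd⟩
    obtain ⟨k, hk⟩ := exists_cayley_adj_mem_iterNbhd hT T'
    exact ⟨_, SimpleGraph.tww_toTrigraphOn_le (fun _ _ => cayley_adj_iff)
      (fun _ => Finset.card_image_le) hk hd⟩
  exact ⟨transfer S S' hS, transfer S' S hS'⟩

/-- having bounded twin-width for the class of finite induced subgraphs of a
Cayley graph does not depend on the chosen finite generating set. -/
theorem twin_width_group_invariant (Γ : Type*) [Group Γ] [DecidableEq Γ] (S S' : Finset Γ)
    (hS : Subgroup.closure (S : Set Γ) = ⊤) (hS' : Subgroup.closure ((S' : Set Γ)) = ⊤)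
    (h1 : (1 : Γ) ∉ S) (h1' : (1 : Γ) ∉ S') :
    (∃ d, ∀ s : Finset Γ, Trigraph.tww ((cayley Γ S).toTrigraphOn s) ≤ d) ↔
    (∃ d', ∀ s : Finset Γ, Trigraph.tww ((cayley Γ S').toTrigraphOn s) ≤ d') :=
  twin_width_group_invariant_general Γ S S' hS hS'
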